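/- arXiv:1701.03835 — 2 statements merged into one kernel-verified Lean document; each statement's English description precedes it below -/
import Mathlib

section
/- In the braid group, for a ≤ b and n ≥ 1, (Π_a^b Π_{a+1}^{b+1} ⋯ Π_{a+n}^{b+n})(Π_a^{a+n-1}) = (Π_a^{b+n})(Π_{a+1}^{b+1} Π_{a+2}^{b+2} ⋯ Π_{a+n}^{b+n}), where Π_a^b = σ_b σ_{b-1} ⋯ σ_a. -/
/-- Braid relations among the generators `σ i` (braid group on sufficiently many strands). -/
def IsBraidGens {G : Type*} [Group G] (σ : ℕ → G) : Prop :=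
  (∀ i j, 1 ≤ i → i + 1 < j → σ i * σ j = σ j * σ i) ∧
  (∀ i, 1 ≤ i → σ i * σ (i + 1) * σ i = σ (i + 1) * σ i * σ (i + 1))

/-- `piProd σ a b = σ_b * σ_{b-1} * ⋯ * σ_a` (decreasing indices); identity if `a > b`. -/
def piProd {G : Type*} [Group G] (σ : ℕ → G) (a b : ℕ) : G :=
  (((List.range' a (b + 1 - a)).reverse).map σ).prod

/-- `chainPi σ a b n = Π_a^b Π_{a+1}^{b+1} ⋯ Π_{a+n}^{b+n}`. -/
def chainPi {G : Type*} [Group G] (σ : ℕ → G) (a b n : ℕ) : G :=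
  ((List.range (n + 1)).map (fun j => piProd σ (a + j) (b + j))).prod

lemma piProd_empty {G : Type*} [Group G] (σ : ℕ → G) {a b : ℕ} (hba : b < a) :
    piProd σ a b = 1 := by
  have : b + 1 - a = 0 := by omega
  simp [piProd, this]

lemma piProd_succ {G : Type*} [Group G] (σ : ℕ → G) {a b : ℕ} (hab : a ≤ b + 1) :
    piProd σ a (b + 1) = σ (b + 1) * piProd σ a b := by
  have h1 : b + 1 + 1 - a = (b + 1 - a) + 1 := by omega
  have h2 : a + (b + 1 - a) = b + 1 := by omega
  rw [piProd, piProd, h1, List.range'_concat, one_mul, h2]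
  simp

lemma sigma_comm_piProd {G : Type*} [Group G] {σ : ℕ → G} (h : IsBraidGens σ)
    {a c i : ℕ} (ha : 1 ≤ a) (hci : c + 1 < i) :
    σ i * piProd σ a c = piProd σ a c * σ i := by
  induction c with
  | zero => rw [piProd_empty σ (by omega)]; group
  | succ c ih =>
    by_cases hac : a ≤ c + 1
    · rw [piProd_succ σ hac, ← mul_assoc, ← h.1 (c+1) i (by omega) (by omega),
        mul_assoc, ih (by omega), ← mul_assoc]
    · rw [piProd_empty σ (by omega)]; group

lemma sigma_mul_piProd {G : Type*} [Group G] {σ : ℕ → G} (h : IsBraidGens σ)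
    {a i B : ℕ} (ha : 1 ≤ a) (hai : a ≤ i) (hiB : i < B) :
    σ i * piProd σ a B = piProd σ a B * σ (i + 1) := by
  induction B with
  | zero => omega
  | succ B ih =>
    rw [piProd_succ σ (by omega)]
    rcases Nat.lt_or_ge i B with hiB' | hiB'
    · rw [← mul_assoc, h.1 i (B+1) (by omega) (by omega), mul_assoc, ih hiB',
        mul_assoc]
    · -- i = B
      obtain ⟨m, rfl⟩ : ∃ m, B = m + 1 := ⟨B - 1, by omega⟩
      have him : i = m + 1 := by omega
      subst him
      rw [piProd_succ σ (show a ≤ m + 1 by omega)]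
      have e1 := h.2 (m+1) (by omega)
      have e2 := sigma_comm_piProd h (σ := σ) (c := m) (i := m + 1 + 1) ha (by omega)
      calc σ (m+1) * (σ (m+1+1) * (σ (m+1) * piProd σ a m))
          = (σ (m+1) * σ (m+1+1) * σ (m+1)) * piProd σ a m := by group
        _ = (σ (m+1+1) * σ (m+1) * σ (m+1+1)) * piProd σ a m := by rw [e1]
        _ = σ (m+1+1) * σ (m+1) * (σ (m+1+1) * piProd σ a m) := by group
        _ = σ (m+1+1) * σ (m+1) * (piProd σ a m * σ (m+1+1)) := by rw [e2]
        _ = σ (m+1+1) * (σ (m+1) * piProd σ a m) * σ (m+1+1) := by group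

lemma piProd_mul_piProd {G : Type*} [Group G] {σ : ℕ → G} (h : IsBraidGens σ)
    {a l u B : ℕ} (ha : 1 ≤ a) (hal : a ≤ l) (huB : u < B) :
    piProd σ l u * piProd σ a B = piProd σ a B * piProd σ (l + 1) (u + 1) := by
  induction u with
  | zero =>
    rw [piProd_empty σ (show (0:ℕ) < l by omega),
      piProd_empty σ (show (0:ℕ) + 1 < l + 1 by omega)]; group
  | succ u ih =>
    by_cases hlu : l ≤ u + 1
    · rw [piProd_succ σ hlu, mul_assoc, ih (by omega), ← mul_assoc,
        sigma_mul_piProd h ha (by omega) (by omega), mul_assoc,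
        ← piProd_succ σ (by omega)]
    · rw [piProd_empty σ (show u + 1 < l by omega),
        piProd_empty σ (show u + 1 + 1 < l + 1 by omega)]; group

lemma piProd_concat {G : Type*} [Group G] (σ : ℕ → G)
    {a c d : ℕ} (hac : a ≤ c + 1) (hcd : c ≤ d) :
    piProd σ (c + 1) d * piProd σ a c = piProd σ a d := by
  induction d, hcd using Nat.le_induction with
  | base => rw [piProd_empty σ (by omega)]; group
  | succ d hd ih =>
    rw [piProd_succ σ (by omega), piProd_succ σ (by omega), mul_assoc, ih]

lemma chainPi_succ {G : Type*} [Group G] (σ : ℕ → G) (a b m : ℕ) :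
    chainPi σ a b (m + 1) = chainPi σ a b m * piProd σ (a + (m+1)) (b + (m+1)) := by
  rw [chainPi, chainPi, List.range_succ]
  simp

lemma chainPi_shift {G : Type*} [Group G] {σ : ℕ → G} (h : IsBraidGens σ)
    {a b m B : ℕ} (ha : 1 ≤ a) (hab : a ≤ b) (hB : b + m < B) :
    chainPi σ a b m * piProd σ a B = piProd σ a B * chainPi σ (a + 1) (b + 1) m := by
  induction m with
  | zero =>
    have h0 : chainPi σ a b 0 = piProd σ a b := by
      simp [chainPi, List.range_succ]
    have h1 : chainPi σ (a+1) (b+1) 0 = piProd σ (a+1) (b+1) := by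
      simp [chainPi, List.range_succ]
    rw [h0, h1, piProd_mul_piProd h ha le_rfl (by omega)]
  | succ m ih =>
    rw [chainPi_succ, mul_assoc, piProd_mul_piProd h ha (by omega) (by omega),
      ← mul_assoc, ih (by omega), mul_assoc,
      show a + (m+1) + 1 = a + 1 + (m+1) by omega,
      show b + (m+1) + 1 = b + 1 + (m+1) by omega, ← chainPi_succ]

/-- For `a ≤ b` and `n ≥ 1`,
`(Π_a^b ⋯ Π_{a+n}^{b+n})(Π_a^{a+n-1}) = (Π_a^{b+n})(Π_{a+1}^{b+1} ⋯ Π_{a+n}^{b+n})`. -/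
theorem stmt3 {G : Type*} [Group G] (σ : ℕ → G) (h : IsBraidGens σ)
    (a b n : ℕ) (ha : 1 ≤ a) (hab : a ≤ b) (hn : 1 ≤ n) :
    chainPi σ a b n * piProd σ a (a + n - 1) =
      piProd σ a (b + n) *
        ((List.range n).map (fun j => piProd σ (a + 1 + j) (b + 1 + j))).prod := by
  obtain ⟨k, rfl⟩ : ∃ k, n = k + 1 := ⟨n - 1, by omega⟩
  have hrhs : ((List.range (k+1)).map (fun j => piProd σ (a + 1 + j) (b + 1 + j))).prod
      = chainPi σ (a + 1) (b + 1) k := rfl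
  rw [hrhs, chainPi_succ]
  have hidx : a + (k + 1) - 1 = a + k := by omega
  have hc : piProd σ (a + (k+1)) (b + (k+1)) * piProd σ a (a + k) = piProd σ a (b + (k+1)) := by
    have := piProd_concat σ (a := a) (c := a + k) (d := b + (k+1)) (by omega) (by omega)
    simpa [show a + k + 1 = a + (k+1) by omega] using this
  rw [hidx, mul_assoc, hc, chainPi_shift h ha hab (by omega)]
end

section
/- Let p, q, r, n be natural numbers with p, q, r ≥ 2, gcd(p,q)=1, and write p = kq + e with k ≥ 0 and 1 ≤ e < q. If n ≤ k, or if n = k+1 and r ≤ e (with r < q), then in the braid group B_q, the braid word (Π_1^{q-1})^p (Π_1^{r-1})^{-nr} is equal to a positive braid word (a product of the generators σ_i with only positive exponents). -/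
/-- The generators `σ 1, …, σ (q-1)` of the braid group `B_q`:
far-apart generators commute and adjacent generators satisfy the braid relation. -/
def IsBraidGensUpTo {G : Type*} [Group G] (q : ℕ) (σ : ℕ → G) : Prop :=
  (∀ i j, 1 ≤ i → i + 1 < j → j + 1 ≤ q → σ i * σ j = σ j * σ i) ∧
  (∀ i, 1 ≤ i → i + 2 ≤ q → σ i * σ (i + 1) * σ i = σ (i + 1) * σ i * σ (i + 1))

/-- `blockA σ q r = Π_1^r Π_2^{r+1} ⋯ Π_{q-r}^{q-1}`. -/
def blockA {G : Type*} [Group G] (σ : ℕ → G) (q r : ℕ) : G :=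
  ((List.range (q - r)).map (fun j => piProd σ (j + 1) (r + j))).prod

/-- `blockB σ q r = Π_1^{q-r} Π_2^{q-r+1} ⋯ Π_r^{q-1}`. -/
def blockB {G : Type*} [Group G] (σ : ℕ → G) (q r : ℕ) : G :=
  ((List.range r).map (fun j => piProd σ (j + 1) (q - r + j))).prod

section Aux

variable {G : Type*} [Group G] (σ : ℕ → G)

lemma piProd_nil (a b : ℕ) (hab : b + 1 ≤ a) : piProd σ a b = 1 := by
  unfold piProd
  rw [Nat.sub_eq_zero_of_le hab]
  simp

lemma piProd_top (a b : ℕ) (hab : a ≤ b + 1) :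
    piProd σ a (b + 1) = σ (b + 1) * piProd σ a b := by
  unfold piProd
  have h1 : b + 1 + 1 - a = (b + 1 - a) + 1 := by omega
  rw [h1, List.range'_1_concat]
  have h2 : a + (b + 1 - a) = b + 1 := by omega
  simp [h2]

lemma piProd_single (a : ℕ) : piProd σ a a = σ a := by
  rcases a with _ | a
  · unfold piProd; simp
  · rw [piProd_top σ (a+1) a le_rfl, piProd_nil σ (a+1) a le_rfl, mul_one]

lemma piProd_split (a b c : ℕ) (h1 : a ≤ c + 1) (h2 : c ≤ b) :
    piProd σ a b = piProd σ (c + 1) b * piProd σ a c := by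
  unfold piProd
  have key : List.range' a (b + 1 - a)
      = List.range' a (c + 1 - a) ++ List.range' (c + 1) (b + 1 - (c + 1)) := by
    have h3 := @List.range'_append_1 a (c + 1 - a) (b + 1 - (c + 1))
    rw [show a + (c + 1 - a) = c + 1 by omega,
      show c + 1 - a + (b + 1 - (c + 1)) = b + 1 - a by omega] at h3
    exact h3.symm
  rw [key]
  simp [List.reverse_append]

variable {σ} {q : ℕ} (h : IsBraidGensUpTo q σ)

include h

/-- `σ j` commutes with a block of generators all below it. -/
lemma comm_low (j : ℕ) (hj : j + 1 ≤ q) :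
    ∀ b a, 1 ≤ a → b + 1 < j → σ j * piProd σ a b = piProd σ a b * σ j := by
  intro b
  induction b with
  | zero =>
    intro a ha _
    rw [piProd_nil σ a 0 (by omega)]; simp
  | succ b ih =>
    intro a ha hb
    by_cases hab : a ≤ b + 1
    · have e := piProd_top σ a b hab
      have c := ih a ha (by omega)
      have c2 := h.1 (b+1) j (by omega) (by omega) hj
      calc σ j * piProd σ a (b+1) = σ j * (σ (b+1) * piProd σ a b) := by rw [e]
        _ = (σ j * σ (b+1)) * piProd σ a b := by simp only [mul_assoc]
        _ = (σ (b+1) * σ j) * piProd σ a b := by rw [← c2]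
        _ = σ (b+1) * (σ j * piProd σ a b) := by simp only [mul_assoc]
        _ = σ (b+1) * (piProd σ a b * σ j) := by rw [c]
        _ = piProd σ a (b+1) * σ j := by rw [e]; simp only [mul_assoc]
    · rw [piProd_nil σ a (b+1) (by omega)]; simp

/-- `σ j` commutes with a block of generators all above it. -/
lemma comm_high (j : ℕ) (hj : 1 ≤ j) :
    ∀ b a, j + 1 < a → b + 1 ≤ q → σ j * piProd σ a b = piProd σ a b * σ j := by
  intro b
  induction b with
  | zero =>
    intro a ha _
    rw [piProd_nil σ a 0 (by omega)]; simp
  | succ b ih =>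
    intro a ha hb
    by_cases hab : a ≤ b + 1
    · have e := piProd_top σ a b hab
      have c := ih a ha (by omega)
      have c2 := h.1 j (b+1) hj (by omega) (by omega)
      calc σ j * piProd σ a (b+1) = σ j * (σ (b+1) * piProd σ a b) := by rw [e]
        _ = (σ j * σ (b+1)) * piProd σ a b := by simp only [mul_assoc]
        _ = (σ (b+1) * σ j) * piProd σ a b := by rw [c2]
        _ = σ (b+1) * (σ j * piProd σ a b) := by simp only [mul_assoc]
        _ = σ (b+1) * (piProd σ a b * σ j) := by rw [c]
        _ = piProd σ a (b+1) * σ j := by rw [e]; simp only [mul_assoc]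
    · rw [piProd_nil σ a (b+1) (by omega)]; simp

/-- Fundamental shift: `Π_1^t σ_{v+2} = σ_{v+1} Π_1^t`. -/
lemma shift1 (t v : ℕ) (ht : t + 1 ≤ q) (hv : v + 2 ≤ t) :
    piProd σ 1 t * σ (v + 2) = σ (v + 1) * piProd σ 1 t := by
  set X := piProd σ (v + 3) t with hX
  set P := piProd σ 1 v with hP
  set A := σ (v + 2) with hA
  set C := σ (v + 1) with hC
  have e : piProd σ 1 t = X * (A * (C * P)) := by
    rw [piProd_split σ 1 t (v + 2) (by omega) (by omega),
      piProd_top σ 1 (v+1) (by omega), piProd_top σ 1 v (by omega)]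
  have c1 : A * P = P * A := comm_low h (v + 2) (by omega) v 1 le_rfl (by omega)
  have c2 : C * X = X * C := comm_high h (v + 1) (by omega) t (v + 3) (by omega) ht
  have br : C * A * C = A * C * A := h.2 (v + 1) (by omega) (by omega)
  calc piProd σ 1 t * A = X * (A * (C * (P * A))) := by rw [e]; simp only [mul_assoc]
    _ = X * (A * (C * (A * P))) := by rw [← c1]
    _ = X * ((A * C * A) * P) := by simp only [mul_assoc]
    _ = X * ((C * A * C) * P) := by rw [← br]
    _ = (X * C) * (A * (C * P)) := by simp only [mul_assoc]
    _ = (C * X) * (A * (C * P)) := by rw [← c2]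
    _ = C * piProd σ 1 t := by rw [e]; simp only [mul_assoc]

/-- Shift through a power of `Δ_t = Π_1^t`. -/
lemma shiftPow (t : ℕ) (ht : t + 1 ≤ q) :
    ∀ m j, 1 ≤ j → j + m ≤ t →
      (piProd σ 1 t) ^ m * σ (j + m) = σ j * (piProd σ 1 t) ^ m := by
  intro m
  induction m with
  | zero => intro j _ _; simp
  | succ m ih =>
    intro j hj hjm
    obtain ⟨u, rfl⟩ : ∃ u, j = u + 1 := ⟨j - 1, by omega⟩
    have e1 : piProd σ 1 t * σ (u + m + 2) = σ (u + m + 1) * piProd σ 1 t :=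
      shift1 h t (u + m) ht (by omega)
    calc (piProd σ 1 t) ^ (m + 1) * σ (u + 1 + (m + 1))
        = (piProd σ 1 t) ^ m * (piProd σ 1 t * σ (u + m + 2)) := by
          rw [show u + 1 + (m + 1) = u + m + 2 by omega, pow_succ]
          simp only [mul_assoc]
      _ = ((piProd σ 1 t) ^ m * σ (u + 1 + m)) * piProd σ 1 t := by
          rw [e1, show u + m + 1 = u + 1 + m by omega]
          simp only [mul_assoc]
      _ = σ (u + 1) * (piProd σ 1 t) ^ (m + 1) := by
          rw [ih (u + 1) (by omega) (by omega), pow_succ]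
          simp only [mul_assoc]

/-- Shift a whole block through a power of `Δ_t`. -/
lemma shiftBlock (t : ℕ) (ht : t + 1 ≤ q) (m : ℕ) :
    ∀ b a, 1 ≤ a → b + m ≤ t →
      (piProd σ 1 t) ^ m * piProd σ (a + m) (b + m)
        = piProd σ a b * (piProd σ 1 t) ^ m := by
  intro b
  induction b with
  | zero =>
    intro a ha _
    rw [Nat.zero_add, piProd_nil σ (a + m) m (by omega), piProd_nil σ a 0 (by omega)]
    simp
  | succ b ih =>
    intro a ha hb
    by_cases hab : a ≤ b + 1
    · have e1 : piProd σ (a + m) (b + 1 + m) = σ (b + 1 + m) * piProd σ (a + m) (b + m) := by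
        rw [show b + 1 + m = (b + m) + 1 by omega, piProd_top σ (a+m) (b+m) (by omega)]
      have sp : (piProd σ 1 t) ^ m * σ (b + 1 + m) = σ (b + 1) * (piProd σ 1 t) ^ m :=
        shiftPow h t ht m (b+1) (by omega) (by omega)
      have ihe := ih a ha (by omega)
      have et := piProd_top σ a b hab
      calc (piProd σ 1 t) ^ m * piProd σ (a + m) (b + 1 + m)
          = ((piProd σ 1 t) ^ m * σ (b + 1 + m)) * piProd σ (a + m) (b + m) := by
            rw [e1]; simp only [mul_assoc]
        _ = σ (b + 1) * ((piProd σ 1 t) ^ m * piProd σ (a + m) (b + m)) := by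
            rw [sp]; simp only [mul_assoc]
        _ = σ (b + 1) * (piProd σ a b * (piProd σ 1 t) ^ m) := by rw [ihe]
        _ = piProd σ a (b + 1) * (piProd σ 1 t) ^ m := by
            rw [et]; simp only [mul_assoc]
    · rw [piProd_nil σ (a + m) (b + 1 + m) (by omega), piProd_nil σ a (b + 1) (by omega)]
      simp

/-- The wrap-around shift: `Δ_t² σ_1 = σ_t Δ_t²`. -/
lemma wrap : ∀ t, 1 ≤ t → t + 1 ≤ q →
    (piProd σ 1 t) ^ 2 * σ 1 = σ t * (piProd σ 1 t) ^ 2 := by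
  intro t
  induction t with
  | zero => omega
  | succ t ih =>
    intro _ ht
    rcases Nat.eq_or_lt_of_le (show 1 ≤ t + 1 by omega) with h1 | h1
    · rw [← h1, piProd_single σ 1, pow_two]
      simp only [mul_assoc]
    · have htpos : 1 ≤ t := by omega
      obtain ⟨u, rfl⟩ : ∃ u, t = u + 1 := ⟨t - 1, by omega⟩
      set D := piProd σ 1 (u + 1) with hD
      set A := σ (u + 2) with hA
      set C := σ (u + 1) with hC
      set P := piProd σ 1 u with hP
      have eD' : piProd σ 1 (u + 2) = A * D := piProd_top σ 1 (u + 1) (by omega)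
      have eD : D = C * P := piProd_top σ 1 u (by omega)
      have c1 : A * P = P * A := comm_low h (u + 2) (by omega) u 1 le_rfl (by omega)
      have br : C * A * C = A * C * A := h.2 (u + 1) (by omega) (by omega)
      have merge : ∀ x : G, C * (P * x) = D * x := by
        intro x; rw [eD]; simp only [mul_assoc]
      have key' : ∀ x : G, D * (A * x) = C * (A * (P * x)) := by
        intro x
        calc D * (A * x) = C * (P * (A * x)) := by rw [eD]; simp only [mul_assoc]
          _ = C * ((P * A) * x) := by simp only [mul_assoc]
          _ = C * ((A * P) * x) := by rw [← c1]
          _ = C * (A * (P * x)) := by simp only [mul_assoc]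
      have br' : ∀ x : G, A * (C * (A * x)) = C * (A * (C * x)) := by
        intro x
        simp only [← mul_assoc]
        rw [br]
      have ihu2 : D * (D * σ 1) = C * (D * D) := by
        have := ih htpos (by omega)
        rw [pow_two] at this
        simpa only [mul_assoc] using this
      have hL : (A * D) ^ 2 * σ 1 = C * (A * (C * (C * (P * D)))) := by
        calc (A * D) ^ 2 * σ 1 = A * (D * (A * (D * σ 1))) := by
              rw [pow_two]; simp only [mul_assoc]
          _ = A * (C * (A * (P * (D * σ 1)))) := by rw [key' (D * σ 1)]
          _ = C * (A * (C * (P * (D * σ 1)))) := br' (P * (D * σ 1))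
          _ = C * (A * (D * (D * σ 1))) := by rw [merge (D * σ 1)]
          _ = C * (A * (C * (D * D))) := by rw [ihu2]
          _ = C * (A * (C * (C * (P * D)))) := by rw [← merge D]
      have hR : A * (A * D) ^ 2 = C * (A * (C * (C * (P * D)))) := by
        calc A * (A * D) ^ 2 = A * (A * (D * (A * D))) := by
              rw [pow_two]; simp only [mul_assoc]
          _ = A * (A * (C * (A * (P * D)))) := by rw [key' D]
          _ = A * (C * (A * (C * (P * D)))) := by rw [br' (P * D)]
          _ = C * (A * (C * (C * (P * D)))) := br' (C * (P * D))
      rw [eD', hL, hR]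

/-- `Δ^q` is central among the generators. -/
lemma deltaq_central (hq : 2 ≤ q) (i : ℕ) (hi1 : 1 ≤ i) (hi2 : i + 1 ≤ q) :
    (piProd σ 1 (q - 1)) ^ q * σ i = σ i * (piProd σ 1 (q - 1)) ^ q := by
  set D := piProd σ 1 (q - 1) with hD
  obtain ⟨u, v, hq1, hi⟩ : ∃ u v, q = u + v + 2 ∧ i = v + 1 :=
    ⟨q - i - 1, i - 1, by omega, by omega⟩
  have ht : (q - 1) + 1 ≤ q := by omega
  have s1 : D ^ v * σ i = σ 1 * D ^ v := by
    have := shiftPow h (q - 1) ht v 1 le_rfl (by omega)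
    rwa [show 1 + v = i by omega] at this
  have s2 : D ^ 2 * σ 1 = σ (i + u) * D ^ 2 := by
    rw [show i + u = q - 1 by omega]
    exact wrap h (q - 1) (by omega) ht
  have s3 : D ^ u * σ (i + u) = σ i * D ^ u :=
    shiftPow h (q - 1) ht u i hi1 (by omega)
  have hsplit : D ^ q = D ^ u * D ^ 2 * D ^ v := by
    rw [← pow_add, ← pow_add]; congr 1; omega
  calc D ^ q * σ i = D ^ u * (D ^ 2 * (D ^ v * σ i)) := by
        rw [hsplit]; simp only [mul_assoc]
    _ = D ^ u * ((D ^ 2 * σ 1) * D ^ v) := by rw [s1]; simp only [mul_assoc]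
    _ = D ^ u * ((σ (i + u) * D ^ 2) * D ^ v) := by rw [s2]
    _ = (D ^ u * σ (i + u)) * (D ^ 2 * D ^ v) := by simp only [mul_assoc]
    _ = (σ i * D ^ u) * (D ^ 2 * D ^ v) := by rw [s3]
    _ = σ i * D ^ q := by rw [hsplit]; simp only [mul_assoc]

end Aux

section Aux2

variable {G : Type*} [Group G] {σ : ℕ → G} {q : ℕ} (h : IsBraidGensUpTo q σ)

/-- Membership of the blocks in the positive submonoid. -/
lemma piProd_mem (a b : ℕ) (ha : 1 ≤ a) (hb : b < q) :
    piProd σ a b ∈ Submonoid.closure {g : G | ∃ i, 1 ≤ i ∧ i < q ∧ g = σ i} := by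
  unfold piProd
  apply Submonoid.list_prod_mem
  intro x hx
  simp only [List.mem_map, List.mem_reverse] at hx
  obtain ⟨i, hi, rfl⟩ := hx
  rw [List.mem_range'] at hi
  obtain ⟨i0, hi0, rfl⟩ := hi
  exact Submonoid.subset_closure ⟨a + 1 * i0, by omega, by omega, rfl⟩

include h

/-- Key step: `Δ^{s+1} = Π_{m+1}^{w+m} Δ^s δ`. -/
lemma key_step (r s m w : ℕ) (hq : 2 ≤ q) (hrw : q = r + w) (hw : 1 ≤ w)
    (hrs : r = s + 1 + m) :
    (piProd σ 1 (q - 1)) ^ (s + 1)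
      = piProd σ (m + 1) (w + m) * (piProd σ 1 (q - 1)) ^ s * piProd σ 1 (s + m) := by
  set D := piProd σ 1 (q - 1) with hD
  have ht : (q - 1) + 1 ≤ q := by omega
  have e1 : D = piProd σ (s + 1) (q - 1) * piProd σ 1 s :=
    piProd_split σ 1 (q - 1) s (by omega) (by omega)
  have c1 : D ^ s * piProd σ (s + 1) (q - 1) = piProd σ 1 (w + m) * D ^ s := by
    have := shiftBlock h (q - 1) ht s (w + m) 1 le_rfl (by omega)
    rwa [show 1 + s = s + 1 by omega, show w + m + s = q - 1 by omega] at this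
  have e2 : piProd σ 1 (w + m) = piProd σ (m + 1) (w + m) * piProd σ 1 m :=
    piProd_split σ 1 (w + m) m (by omega) (by omega)
  have c2 : D ^ s * piProd σ (s + 1) (s + m) = piProd σ 1 m * D ^ s := by
    have := shiftBlock h (q - 1) ht s m 1 le_rfl (by omega)
    rwa [show 1 + s = s + 1 by omega, show m + s = s + m by omega] at this
  have e3 : piProd σ 1 (s + m) = piProd σ (s + 1) (s + m) * piProd σ 1 s :=
    piProd_split σ 1 (s + m) s (by omega) (by omega)
  calc D ^ (s + 1) = D ^ s * (piProd σ (s + 1) (q - 1) * piProd σ 1 s) := by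
        rw [← e1, ← pow_succ]
    _ = (D ^ s * piProd σ (s + 1) (q - 1)) * piProd σ 1 s := by simp only [mul_assoc]
    _ = (piProd σ 1 (w + m) * D ^ s) * piProd σ 1 s := by rw [c1]
    _ = piProd σ (m + 1) (w + m) * ((piProd σ 1 m * D ^ s) * piProd σ 1 s) := by
        rw [e2]; simp only [mul_assoc]
    _ = piProd σ (m + 1) (w + m) * ((D ^ s * piProd σ (s + 1) (s + m)) * piProd σ 1 s) := by
        rw [c2]
    _ = piProd σ (m + 1) (w + m) * (D ^ s * (piProd σ (s + 1) (s + m) * piProd σ 1 s)) := by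
        simp only [mul_assoc]
    _ = piProd σ (m + 1) (w + m) * (D ^ s * piProd σ 1 (s + m)) := by rw [← e3]
    _ = piProd σ (m + 1) (w + m) * D ^ s * piProd σ 1 (s + m) := by simp only [mul_assoc]

/-- Accumulation: `Δ^r = C_m Δ^{r-m} δ^m`. -/
lemma accum (r w : ℕ) (hq : 2 ≤ q) (hrw : q = r + w) (hw : 1 ≤ w) (hr : 1 ≤ r) :
    ∀ m, m ≤ r →
      (piProd σ 1 (q - 1)) ^ r
        = ((List.range m).map (fun j => piProd σ (j + 1) (w + j))).prod
            * (piProd σ 1 (q - 1)) ^ (r - m) * (piProd σ 1 (r - 1)) ^ m := by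
  intro m
  induction m with
  | zero => simp
  | succ m ih =>
    intro hm
    obtain ⟨s, hs⟩ : ∃ s, r - m = s + 1 := ⟨r - m - 1, by omega⟩
    have hks := key_step h r s m w hq hrw hw (by omega)
    rw [show s + m = r - 1 by omega] at hks
    calc (piProd σ 1 (q - 1)) ^ r
        = ((List.range m).map (fun j => piProd σ (j + 1) (w + j))).prod
            * (piProd σ 1 (q - 1)) ^ (r - m) * (piProd σ 1 (r - 1)) ^ m :=
          ih (by omega)
      _ = ((List.range m).map (fun j => piProd σ (j + 1) (w + j))).prod
            * (piProd σ (m + 1) (w + m) * (piProd σ 1 (q - 1)) ^ s * piProd σ 1 (r - 1))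
            * (piProd σ 1 (r - 1)) ^ m := by rw [hs, hks]
      _ = ((List.range (m + 1)).map (fun j => piProd σ (j + 1) (w + j))).prod
            * (piProd σ 1 (q - 1)) ^ (r - (m + 1)) * (piProd σ 1 (r - 1)) ^ (m + 1) := by
          rw [List.range_succ, List.map_append, List.prod_append,
            show r - (m + 1) = s by omega, pow_succ']
          simp only [List.map_cons, List.map_nil, List.prod_cons, List.prod_nil, mul_one]
          simp only [mul_assoc]

/-- The fundamental positivity identity `Δ^r = blockB · δ^r`. -/
lemma delta_pow_r (r : ℕ) (hq : 2 ≤ q) (hr : 1 ≤ r) (hrq : r < q) :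
    (piProd σ 1 (q - 1)) ^ r = blockB σ q r * (piProd σ 1 (r - 1)) ^ r := by
  have := accum h r (q - r) hq (by omega) (by omega) hr r le_rfl
  rw [Nat.sub_self, pow_zero, mul_one] at this
  rw [this]
  rfl

end Aux2

/-- If `n ≤ k`, or `n = k + 1` and `r ≤ e` (where `p = kq + e`, `1 ≤ e < q`), then the braid
`(Π_1^{q-1})^p (Π_1^{r-1})^{-nr}` of the twisted torus knot `K(p,q,r,-n)` is a positive braid,
i.e. lies in the submonoid of `B_q` generated by `σ_1, …, σ_{q-1}`. -/
theorem stmt8 {G : Type*} [Group G] (q : ℕ) (σ : ℕ → G) (h : IsBraidGensUpTo q σ)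
    (p r n k e : ℕ) (hp : 2 ≤ p) (hq : 2 ≤ q) (hr : 2 ≤ r) (hrq : r < q)
    (hgcd : Nat.gcd p q = 1) (hpe : p = k * q + e) (he1 : 1 ≤ e) (he2 : e < q)
    (hn : n ≤ k ∨ (n = k + 1 ∧ r ≤ e)) :
    (piProd σ 1 (q - 1)) ^ p * ((piProd σ 1 (r - 1)) ^ (n * r))⁻¹ ∈
      Submonoid.closure {g : G | ∃ i, 1 ≤ i ∧ i < q ∧ g = σ i} := by
  set S : Set G := {g : G | ∃ i, 1 ≤ i ∧ i < q ∧ g = σ i} with hS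
  set D := piProd σ 1 (q - 1) with hD
  set d := piProd σ 1 (r - 1) with hd
  set B := blockB σ q r with hB
  -- membership facts
  have hDmem : D ∈ Submonoid.closure S := piProd_mem 1 (q - 1) le_rfl (by omega)
  have hBmem : B ∈ Submonoid.closure S := by
    rw [hB]; unfold blockB
    apply Submonoid.list_prod_mem
    intro x hx
    simp only [List.mem_map, List.mem_range] at hx
    obtain ⟨j, hj, rfl⟩ := hx
    exact piProd_mem (j + 1) (q - r + j) (by omega) (by omega)
  -- centrality of D^q
  have hcentral : ∀ x ∈ Submonoid.closure S, D ^ q * x = x * D ^ q := by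
    intro x hx
    induction hx using Submonoid.closure_induction with
    | mem g hg =>
      obtain ⟨i, hi1, hi2, rfl⟩ := hg
      exact deltaq_central h hq i hi1 (by omega)
    | one => simp
    | mul a b _ _ ha hb => rw [← mul_assoc, ha, mul_assoc, hb, ← mul_assoc]
  -- key identity
  have hF1 : D ^ r = B * d ^ r := delta_pow_r h r hq (by omega) hrq
  have hF1' : D ^ r * (d ^ r)⁻¹ = B := by rw [hF1, mul_assoc]; simp
  have hF1'' : ∀ z : G, D ^ r * ((d ^ r)⁻¹ * z) = B * z := by
    intro z; rw [← mul_assoc, hF1']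
  have hqsplit : D ^ q = D ^ (q - r) * D ^ r := by rw [← pow_add]; congr 1; omega
  -- the absorbed power
  have habsorb : ∀ m : ℕ, D ^ (m * q) * (d ^ (m * r))⁻¹ = (D ^ (q - r) * B) ^ m := by
    intro m
    induction m with
    | zero => simp
    | succ m ih =>
      have hmem : (D ^ (q - r) * B) ^ m ∈ Submonoid.closure S :=
        pow_mem (mul_mem (pow_mem hDmem _) hBmem) m
      calc D ^ ((m + 1) * q) * (d ^ ((m + 1) * r))⁻¹
          = D ^ q * (D ^ (m * q) * ((d ^ (m * r))⁻¹ * (d ^ r)⁻¹)) := by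
            rw [show (m+1)*q = q + m*q by ring, show (m+1)*r = r + m*r by ring,
              pow_add, pow_add, mul_inv_rev]
            simp only [mul_assoc]
        _ = D ^ q * ((D ^ (q - r) * B) ^ m * (d ^ r)⁻¹) := by
            rw [show D ^ (m * q) * ((d ^ (m * r))⁻¹ * (d ^ r)⁻¹)
                = (D ^ (m * q) * (d ^ (m * r))⁻¹) * (d ^ r)⁻¹ by simp only [mul_assoc], ih]
        _ = (D ^ (q - r) * B) ^ m * (D ^ q * (d ^ r)⁻¹) := by
            rw [← mul_assoc, hcentral _ hmem, mul_assoc]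
        _ = (D ^ (q - r) * B) ^ m * (D ^ (q - r) * (D ^ r * (d ^ r)⁻¹)) := by
            rw [hqsplit]; simp only [mul_assoc]
        _ = (D ^ (q - r) * B) ^ (m + 1) := by rw [hF1', pow_succ]
  rcases hn with hnk | ⟨hnk, hre⟩
  · -- n ≤ k : p ≥ n*q
    have hnq : n * q ≤ p := by
      have : n * q ≤ k * q := Nat.mul_le_mul_right q hnk
      omega
    have key : D ^ p * (d ^ (n * r))⁻¹
        = D ^ (p - n * q) * (D ^ (n * q) * (d ^ (n * r))⁻¹) := by
      rw [show D ^ p = D ^ (p - n * q) * D ^ (n * q) by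
        rw [← pow_add]; congr 1; omega]
      simp only [mul_assoc]
    rw [key, habsorb n]
    exact mul_mem (pow_mem hDmem _) (pow_mem (mul_mem (pow_mem hDmem _) hBmem) n)
  · -- n = k + 1, r ≤ e
    subst hnk
    have hmem : D ^ (e - r) * B ∈ Submonoid.closure S :=
      mul_mem (pow_mem hDmem _) hBmem
    have hcomm : D ^ (k * q) * (D ^ (e - r) * B) = (D ^ (e - r) * B) * D ^ (k * q) := by
      have hc : Commute (D ^ q) (D ^ (e - r) * B) := hcentral _ hmem
      have := (hc.pow_left k).eq
      rwa [← pow_mul, mul_comm q k] at this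
    have key : D ^ p * (d ^ ((k + 1) * r))⁻¹
        = (D ^ (e - r) * B) * ((D ^ (q - r) * B) ^ k) := by
      calc D ^ p * (d ^ ((k + 1) * r))⁻¹
          = D ^ (k * q) * (D ^ (e - r) * (D ^ r * ((d ^ r)⁻¹ * (d ^ (k * r))⁻¹))) := by
            rw [hpe, show k * q + e = k * q + (e - r) + r by omega,
              show (k + 1) * r = k * r + r by ring, pow_add, pow_add, pow_add, mul_inv_rev]
            simp only [mul_assoc]
        _ = D ^ (k * q) * (D ^ (e - r) * (B * (d ^ (k * r))⁻¹)) := by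
            rw [hF1'' ((d ^ (k * r))⁻¹)]
        _ = (D ^ (k * q) * (D ^ (e - r) * B)) * (d ^ (k * r))⁻¹ := by
            simp only [mul_assoc]
        _ = (D ^ (e - r) * B) * (D ^ (k * q) * (d ^ (k * r))⁻¹) := by
            rw [hcomm]; simp only [mul_assoc]
        _ = (D ^ (e - r) * B) * ((D ^ (q - r) * B) ^ k) := by rw [habsorb k]
    rw [key]
    exact mul_mem hmem (pow_mem (mul_mem (pow_mem hDmem _) hBmem) k)
end
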